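/- arXiv:2407.09319 — 4 statements merged into one kernel-verified Lean document; each statement's English description precedes it below -/
import Mathlib

section
/- Let R be a one-dimensional Noetherian domain and n ⊆ R a nonzero ideal. Every class of invertible fractional R-ideals modulo principal fractional ideals contains an integral representative coprime to n. -/
/-!
Since every nonzero prime is maximal, the maximal ideals `m₁, …, mₖ` containing `n` are the
minimal primes over `n`, hence finitely many. Let `b = a⁻¹`. For `α ∈ b` the fractional ideal
`αa` is integral, and `αa ⊆ mᵢ` exactly when `α ∈ mᵢb`. As `mᵢb ≠ b`, choosing
`yᵢ ∈ b \ mᵢb` and `eᵢ ∈ ⋂_{j ≠ i} mⱼ \ mᵢ`, the element `α = ∑ eᵢyᵢ` lies in no `mᵢb`,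
so no maximal ideal contains both `αa` and `n`.
-/

open FractionalIdeal

theorem Ideal.finite_setOf_isMaximal_le {R : Type*} [CommRing R] [IsNoetherianRing R]
    {n : Ideal R} (h : ∀ p : Ideal R, p.IsPrime → n ≤ p → p.IsMaximal) :
    {m : Ideal R | m.IsMaximal ∧ n ≤ m}.Finite := by
  refine n.finite_minimalPrimes_of_isNoetherianRing.subset fun m ⟨hm, hnm⟩ => ?_
  have := hm.isPrime
  obtain ⟨q, hq, hqm⟩ := Ideal.exists_minimalPrimes_le hnm
  rwa [(h q hq.1.1 hq.1.2).eq_of_le hm.ne_top hqm] at hq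

section Avoidance

variable {R M : Type*} [CommRing R] [AddCommGroup M] [Module R M]

theorem Submodule.mem_of_smul_mem_of_notMem_isMaximal {m : Ideal R} (hm : m.IsMaximal)
    {N P : Submodule R M} (hP : m • N ≤ P) {e : R} (he : e ∉ m) {y : M} (hy : y ∈ N)
    (hey : e • y ∈ P) : y ∈ P := by
  obtain ⟨c, i, hi, hci⟩ := hm.exists_inv he
  have hy_eq : y = c • e • y + i • y := by rw [smul_smul, ← add_smul, hci, one_smul]
  rw [hy_eq]
  exact P.add_mem (P.smul_mem c hey) (hP (Submodule.smul_mem_smul hi hy))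

theorem Submodule.exists_mem_forall_notMem_of_smul_le {N : Submodule R M}
    (s : Finset (Ideal R)) (P : Ideal R → Submodule R M) (hmax : ∀ m ∈ s, m.IsMaximal)
    (hP : ∀ m ∈ s, m • N ≤ P m) (hN : ∀ m ∈ s, ¬N ≤ P m) : ∃ x ∈ N, ∀ m ∈ s, x ∉ P m := by
  classical
  have hy : ∀ m ∈ s, ∃ y ∈ N, y ∉ P m := fun m hm => SetLike.not_le_iff_exists.mp (hN m hm)
  have he : ∀ m ∈ s, ∃ e ∈ (s.erase m).inf id, e ∉ m := by
    intro m hm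
    refine SetLike.not_le_iff_exists.mp fun hle => ?_
    obtain ⟨q, hq, hqm⟩ := (hmax m hm).isPrime.inf_le'.mp hle
    exact Finset.ne_of_mem_erase hq
      ((hmax q (Finset.mem_of_mem_erase hq)).eq_of_le (hmax m hm).ne_top hqm)
  choose! y hyN hyP using hy
  choose! e he_inf he_notMem using he
  refine ⟨∑ m ∈ s, e m • y m, N.sum_mem fun m hm => N.smul_mem _ (hyN m hm),
    fun m hm hmem => ?_⟩
  have hrest : ∑ q ∈ s.erase m, e q • y q ∈ P m := by
    refine (P m).sum_mem fun q hq => ?_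
    have hqs : q ∈ s := Finset.mem_of_mem_erase hq
    have he_mem : e q ∈ m := Finset.inf_le (f := id)
      (Finset.mem_erase.mpr ⟨(Finset.ne_of_mem_erase hq).symm, hm⟩) (he_inf q hqs)
    exact hP m hm (Submodule.smul_mem_smul he_mem (hyN q hqs))
  rw [← Finset.add_sum_erase s _ hm] at hmem
  exact hyP m hm (mem_of_smul_mem_of_notMem_isMaximal (hmax m hm) (hP m hm) (he_notMem m hm)
    (hyN m hm) (((P m).add_mem_iff_left hrest).mp hmem))

end Avoidance

namespace FractionalIdeal

section General

variable {R P : Type*} [CommRing R] [CommRing P] [Algebra R P] {S : Submonoid R}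

theorem smul_le_coeIdeal_mul (I : Ideal R) (b : FractionalIdeal S P) :
    I • (b : Submodule R P) ≤ ((I * b : FractionalIdeal S P) : Submodule R P) :=
  Submodule.smul_le.mpr fun r hr y hy => by
    rw [Algebra.smul_def]
    exact mul_mem_mul (mem_coeIdeal_of_mem _ hr) hy

variable [IsLocalization S P] {a b : FractionalIdeal S P}

theorem spanSingleton_mul_le_iff_mem_mul (hab : a * b = 1) {α : P} {I : FractionalIdeal S P} :
    spanSingleton S α * a ≤ I ↔ α ∈ I * b := by
  rw [← spanSingleton_le_iff_mem]
  constructor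
  · intro h
    calc spanSingleton S α = spanSingleton S α * a * b := by rw [mul_assoc, hab, mul_one]
      _ ≤ I * b := _root_.mul_le_mul_left h b
  · intro h
    calc spanSingleton S α * a ≤ I * b * a := _root_.mul_le_mul_left h a
      _ = I := by rw [mul_assoc, mul_comm b, hab, mul_one]

theorem exists_coeIdeal_eq_spanSingleton_mul (hab : a * b = 1) {α : P} (hα : α ∈ b) :
    ∃ J : Ideal R, (J : FractionalIdeal S P) = spanSingleton S α * a :=
  le_one_iff_exists_coeIdeal.mp ((spanSingleton_mul_le_iff_mem_mul hab).mpr (by rwa [one_mul]))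

end General

theorem not_le_coeIdeal_mul {R K : Type*} [CommRing R] [Field K] [Algebra R K]
    [IsFractionRing R K] {a b : FractionalIdeal (nonZeroDivisors R) K} (hab : a * b = 1)
    {I : Ideal R} (hI : I ≠ ⊤) : ¬b ≤ (I : FractionalIdeal (nonZeroDivisors R) K) * b :=
  fun h => hI <| by
    have h1 : 1 ≤ (I : FractionalIdeal (nonZeroDivisors R) K) := by
      calc 1 = a * b := hab.symm
        _ ≤ a * (I * b) := _root_.mul_le_mul_right h a
        _ = I := by rw [mul_left_comm, hab, mul_one]
    exact (Ideal.one_eq_top (R := R)) ▸ coeIdeal_eq_one.mp (coeIdeal_le_one.antisymm h1)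

end FractionalIdeal

theorem stmt_7_general {R K : Type*} [CommRing R] [IsNoetherianRing R]
    [Field K] [Algebra R K] [IsFractionRing R K]
    (hdim : ∀ p : Ideal R, p.IsPrime → p ≠ ⊥ → p.IsMaximal)
    (n : Ideal R) (hn : n ≠ ⊥)
    (a : FractionalIdeal (nonZeroDivisors R) K) (ha : IsUnit a) :
    ∃ (α : K) (J : Ideal R), α ≠ 0 ∧
      (J : FractionalIdeal (nonZeroDivisors R) K) =
        FractionalIdeal.spanSingleton (nonZeroDivisors R) α * a ∧
      J ⊔ n = ⊤ := by
  obtain ⟨b, hab⟩ := isUnit_iff_exists_inv.mp ha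
  rcases eq_or_ne n ⊤ with rfl | hn_top
  · have hb : (b : Submodule R K) ≠ ⊥ :=
      coeToSubmodule_ne_bot.mpr fun hb => zero_ne_one (by rwa [hb, mul_zero] at hab)
    obtain ⟨α, hαb, hα0⟩ := Submodule.exists_mem_ne_zero_of_ne_bot hb
    obtain ⟨J, hJ⟩ := exists_coeIdeal_eq_spanSingleton_mul hab hαb
    exact ⟨α, J, hα0, hJ, sup_top_eq J⟩
  have hs := Ideal.finite_setOf_isMaximal_le (n := n) fun p hp hnp =>
    hdim p hp (ne_bot_of_le_ne_bot hn hnp)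
  obtain ⟨α, hαb, hα⟩ := Submodule.exists_mem_forall_notMem_of_smul_le hs.toFinset
    (fun m => ((m * b : FractionalIdeal (nonZeroDivisors R) K) : Submodule R K))
    (fun m hm => (hs.mem_toFinset.mp hm).1) (fun m _ => smul_le_coeIdeal_mul m b)
    (fun m hm => not_le_coeIdeal_mul hab (hs.mem_toFinset.mp hm).1.ne_top)
  have hα_not_le : ∀ m : Ideal R, m.IsMaximal → n ≤ m →
      ¬spanSingleton _ α * a ≤ (m : FractionalIdeal (nonZeroDivisors R) K) := fun m hm hnm h =>
    hα m (hs.mem_toFinset.mpr ⟨hm, hnm⟩) ((spanSingleton_mul_le_iff_mem_mul hab).mp h)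
  obtain ⟨J, hJ⟩ := exists_coeIdeal_eq_spanSingleton_mul hab hαb
  refine ⟨α, J, ?_, hJ, ?_⟩
  · rintro rfl
    obtain ⟨m, hm, hnm⟩ := Ideal.exists_le_maximal n hn_top
    exact hα_not_le m hm hnm (by simp)
  · by_contra hJn
    obtain ⟨m, hm, hJnm⟩ := Ideal.exists_le_maximal _ hJn
    exact hα_not_le m hm (le_sup_right.trans hJnm)
      (hJ ▸ (coeIdeal_le_coeIdeal K).mpr (le_sup_left.trans hJnm))

/-- In a one-dimensional Noetherian domain `R`, every class of invertible fractional
ideals contains an integral representative coprime to a given nonzero ideal `n`: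
for any invertible fractional ideal `a` there is `α ∈ K×` and an ideal `J ⊆ R` with
`J = αa` and `J + n = R`. -/
theorem stmt_7 {R K : Type*} [CommRing R] [IsDomain R] [IsNoetherianRing R]
    [Field K] [Algebra R K] [IsFractionRing R K]
    (hdim : ∀ p : Ideal R, p.IsPrime → p ≠ ⊥ → p.IsMaximal)
    (n : Ideal R) (hn : n ≠ ⊥)
    (a : FractionalIdeal (nonZeroDivisors R) K) (ha : IsUnit a) :
    ∃ (α : K) (J : Ideal R), α ≠ 0 ∧
      (J : FractionalIdeal (nonZeroDivisors R) K) =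
        FractionalIdeal.spanSingleton (nonZeroDivisors R) α * a ∧
      J ⊔ n = ⊤ :=
  stmt_7_general hdim n hn a ha
end

section
/- Let R be a one-dimensional Noetherian domain in which every nonzero ideal is contained in only finitely many prime ideals. Then every invertible ideal a ⊆ R can be generated by two elements; moreover, for any nonzero a ∈ a there exists b ∈ a with a = (a, b). -/
/-!
Let `a ∈ I` be nonzero. For an invertible ideal `I`, an ideal `A ≤ I` equals `I` as soon as
`A ⊄ m * I` for every maximal ideal `m` (write `A = C * I`; a proper `C` lies in some `m`).
Hence `(a, b) = I` for any `b ∈ I` lying outside `m * I` for each of the finitely many maximal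
ideals `m` with `a ∈ m * I`. Such a `b` exists by the Chinese remainder theorem, because
`m * I ≠ I` by cancellation of `I`.
-/

open FractionalIdeal Function
open scoped nonZeroDivisors

theorem Submodule.exists_mem_forall_sub_mem_smul {R M ι : Type*} [CommRing R] [AddCommGroup M]
    [Module R M] [Fintype ι] {p : ι → Ideal R} (hp : Pairwise (IsCoprime on p))
    {N : Submodule R M} {x : ι → M} (hx : ∀ i, x i ∈ N) :
    ∃ b ∈ N, ∀ i, b - x i ∈ p i • N := by
  classical
  choose e he using fun i => Ideal.exists_forall_sub_mem_ideal hp (Pi.single i 1)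
  refine ⟨∑ i, e i • x i, N.sum_mem fun i _ => N.smul_mem _ (hx i), fun j => ?_⟩
  have hxj : x j = ∑ i, (Pi.single i (1 : R) : ι → R) j • x i := by
    simp [Pi.single_apply]
  rw [hxj, ← Finset.sum_sub_distrib]
  refine Submodule.sum_mem _ fun i _ => ?_
  rw [← sub_smul]
  exact Submodule.smul_mem_smul (he i j) (hx i)

theorem Submodule.exists_mem_forall_notMem_smul {R M ι : Type*} [CommRing R] [AddCommGroup M]
    [Module R M] [Finite ι] {p : ι → Ideal R} (hp : Pairwise (IsCoprime on p))
    {N : Submodule R M} (hN : ∀ i, p i • N ≠ N) :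
    ∃ b ∈ N, ∀ i, b ∉ p i • N := by
  have := Fintype.ofFinite ι
  have hx : ∀ i, ∃ x ∈ N, x ∉ p i • N := fun i =>
    SetLike.exists_of_lt (lt_of_le_of_ne Submodule.smul_le_right (hN i))
  choose x hxN hx using hx
  obtain ⟨b, hbN, hb⟩ := exists_mem_forall_sub_mem_smul hp hxN
  refine ⟨b, hbN, fun i hbi => hx i ?_⟩
  simpa using Submodule.sub_mem _ hbi (hb i)

namespace Ideal

variable {R K : Type*} [CommRing R] [CommRing K] [Algebra R K] [IsFractionRing R K]
  {I : Ideal R}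

theorem ne_bot_of_isUnit_coeIdeal [Nontrivial K] (hI : IsUnit (I : FractionalIdeal R⁰ K)) :
    I ≠ ⊥ := by
  rintro rfl
  have : Nontrivial R := (algebraMap R K).domain_nontrivial
  rw [coeIdeal_bot, isUnit_zero_iff, ← coeIdeal_bot, ← coeIdeal_top] at hI
  exact bot_ne_top (coeIdeal_injective' le_rfl hI)

theorem mul_right_cancel_of_isUnit_coeIdeal (hI : IsUnit (I : FractionalIdeal R⁰ K))
    {J J' : Ideal R} (h : J * I = J' * I) : J = J' := by
  apply coeIdeal_injective' (P := K) le_rfl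
  simpa only [coeIdeal_mul, hI.mul_left_inj] using
    congrArg ((↑) : Ideal R → FractionalIdeal R⁰ K) h

theorem exists_eq_mul_of_le_of_isUnit_coeIdeal (hI : IsUnit (I : FractionalIdeal R⁰ K))
    {A : Ideal R} (hA : A ≤ I) : ∃ C : Ideal R, A = C * I := by
  obtain ⟨u, hu⟩ := hI
  have hle : (A : FractionalIdeal R⁰ K) * ↑u⁻¹ ≤ 1 := by
    rw [← u.mul_inv, hu]
    exact mul_le_mul_left ((coeIdeal_le_coeIdeal K).mpr hA) _
  obtain ⟨C, hC⟩ := le_one_iff_exists_coeIdeal.mp hle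
  refine ⟨C, coeIdeal_injective' (P := K) le_rfl ?_⟩
  change (A : FractionalIdeal R⁰ K) = ↑(C * I)
  rw [coeIdeal_mul, hC, ← hu, mul_assoc, u.inv_mul, mul_one]

theorem eq_of_le_of_forall_not_le_mul_of_isUnit_coeIdeal
    (hI : IsUnit (I : FractionalIdeal R⁰ K)) {A : Ideal R} (hA : A ≤ I)
    (hmax : ∀ m : Ideal R, m.IsMaximal → ¬A ≤ m * I) : A = I := by
  obtain ⟨C, rfl⟩ := exists_eq_mul_of_le_of_isUnit_coeIdeal hI hA
  obtain rfl | hC := eq_or_ne C ⊤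
  · exact top_mul I
  obtain ⟨m, hm, hCm⟩ := exists_le_maximal C hC
  exact absurd (mul_le_mul_left hCm I) (hmax m hm)

theorem exists_span_pair_eq_of_isUnit_coeIdeal (hI : IsUnit (I : FractionalIdeal R⁰ K))
    {a : R} (ha : a ∈ I) (hfin : {m : Ideal R | m.IsMaximal ∧ a ∈ m}.Finite) :
    ∃ b ∈ I, I = span {a, b} := by
  let S := {m : Ideal R | m.IsMaximal ∧ a ∈ m * I}
  have hS : S.Finite := hfin.subset fun m hm => ⟨hm.1, mul_le_left hm.2⟩
  have : Finite S := hS.to_subtype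
  have hcop : Pairwise (IsCoprime on fun m : S => (m : Ideal R)) := fun m n hmn =>
    isCoprime_iff_sup_eq.mpr (m.2.1.coprime_of_ne n.2.1 (Subtype.coe_ne_coe.mpr hmn))
  have hproper : ∀ m : S, (m : Ideal R) • I ≠ I := fun m hm =>
    m.2.1.ne_top (mul_right_cancel_of_isUnit_coeIdeal hI (hm.trans (top_mul I).symm))
  obtain ⟨b, hbI, hb⟩ := Submodule.exists_mem_forall_notMem_smul hcop hproper
  refine ⟨b, hbI, (eq_of_le_of_forall_not_le_mul_of_isUnit_coeIdeal hI ?_ ?_).symm⟩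
  · exact span_le.mpr (Set.insert_subset ha (Set.singleton_subset_iff.mpr hbI))
  · intro m hm hle
    exact hb ⟨m, hm, hle (subset_span (by simp))⟩ (hle (subset_span (by simp)))

end Ideal

theorem stmt_8_general {R K : Type*} [CommRing R]
    [Field K] [Algebra R K] [IsFractionRing R K]
    (hfinprimes : ∀ J : Ideal R, J ≠ ⊥ → {p : Ideal R | p.IsPrime ∧ J ≤ p}.Finite)
    (I : Ideal R)
    (hI : IsUnit (I : FractionalIdeal (nonZeroDivisors R) K)) :
    (∃ x y : R, I = Ideal.span {x, y}) ∧
      ∀ a ∈ I, a ≠ 0 → ∃ b ∈ I, I = Ideal.span {a, b} := by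
  have hgen : ∀ a ∈ I, a ≠ 0 → ∃ b ∈ I, I = Ideal.span {a, b} := by
    intro a ha ha0
    refine Ideal.exists_span_pair_eq_of_isUnit_coeIdeal hI ha ?_
    refine (hfinprimes _ (Ideal.span_singleton_eq_bot.not.mpr ha0)).subset fun m hm =>
      ⟨hm.1.isPrime, (Ideal.span_singleton_le_iff_mem m).mpr hm.2⟩
  obtain ⟨a, ha, ha0⟩ :=
    Submodule.exists_mem_ne_zero_of_ne_bot (Ideal.ne_bot_of_isUnit_coeIdeal hI)
  obtain ⟨b, -, hab⟩ := hgen a ha ha0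
  exact ⟨⟨a, b, hab⟩, hgen⟩

/-- Let `R` be a one-dimensional Noetherian domain in which every nonzero ideal is
contained in only finitely many primes.  Then every invertible ideal `I ⊆ R` is
generated by two elements; moreover any nonzero `a ∈ I` can be taken as one of the
generators. -/
theorem stmt_8 {R K : Type*} [CommRing R] [IsDomain R] [IsNoetherianRing R]
    [Field K] [Algebra R K] [IsFractionRing R K]
    (hdim : ∀ p : Ideal R, p.IsPrime → p ≠ ⊥ → p.IsMaximal)
    (hfinprimes : ∀ J : Ideal R, J ≠ ⊥ → {p : Ideal R | p.IsPrime ∧ J ≤ p}.Finite)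
    (I : Ideal R)
    (hI : IsUnit (I : FractionalIdeal (nonZeroDivisors R) K)) :
    (∃ x y : R, I = Ideal.span {x, y}) ∧
      ∀ a ∈ I, a ≠ 0 → ∃ b ∈ I, I = Ideal.span {a, b} :=
  stmt_8_general hfinprimes I hI
end

section
/- Let R ⊆ A be an order in a Dedekind domain A with conductor c. If a prime ideal p of R is invertible, then p is coprime to c (p + c = R), and conversely every prime of R coprime to c is invertible. -/
/-!
Write `𝒪` for `A` viewed as an `R`-submodule of `K`. The conductor is then `1 / 𝒪`, and it is
stable under multiplication by `𝒪`.

If `p` is invertible and `c ⊆ p`, then `p⁻¹ c 𝒪 = p⁻¹ c ⊆ p⁻¹ p = R`, so `p⁻¹ c` lies in the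
conductor and `c = p (p⁻¹ c) ⊆ p c`. Extending to `A` gives `cA = (pA)(cA)` with `cA ≠ 0`, and
cancellation in the Dedekind domain `A` forces `pA = A`, impossible for a proper ideal of `R`
since `A` is integral over `R`. Hence `p + c = R`, as `p` is maximal.

Conversely, if `p + c = R`, let `J` be the inverse of `pA` in `A`, so that `p J = 𝒪`. Then
`c J p = c 𝒪 ⊆ R` puts `c J` inside `p⁻¹`, and `c = c 𝒪 = p (c J) ⊆ p p⁻¹`. Together with
`p ⊆ p p⁻¹` this gives `R = p + c ⊆ p p⁻¹`.
-/

open IsLocalization Submodule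

section

variable {R A K : Type*} [CommRing R] [CommRing A] [CommRing K] [Algebra R A] [Algebra R K]
  [Algebra A K] [IsScalarTower R A K]

theorem Submodule.restrictScalars_span_mul (P : Submodule R K) (J : Submodule A K) :
    (span A (P : Set K) * J).restrictScalars R = P * J.restrictScalars R := by
  apply le_antisymm
  · intro z hz
    rw [restrictScalars_mem] at hz
    refine Submodule.mul_induction_on hz (fun m hm n hn => ?_) (fun _ _ => add_mem)
    induction hm using span_induction generalizing n with
    | mem m hm => exact mul_mem_mul hm hn
    | zero => simp
    | add m m' _ _ ih ih' => rw [add_mul]; exact add_mem (ih n hn) (ih' n hn)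
    | smul a m _ ih => rw [smul_mul_assoc, ← mul_smul_comm]; exact ih _ (J.smul_mem a hn)
  · rw [mul_le]
    intro m hm n hn
    exact (mul_mem_mul (subset_span hm) hn : m * n ∈ span A (P : Set K) * J)

theorem IsLocalization.coeSubmodule_map_algebraMap (I : Ideal R) :
    coeSubmodule K (I.map (algebraMap R A)) = span A (coeSubmodule K I : Set K) := by
  rw [Ideal.map, coeSubmodule_span, Set.image_image, coeSubmodule, Submodule.map_coe]
  simp_rw [← IsScalarTower.algebraMap_apply]
  rfl

end

theorem Ring.DimensionLEOne.of_isIntegral_of_faithfulSMul (R B : Type*) [CommRing R]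
    [CommRing B] [IsDomain B] [Algebra R B] [Algebra.IsIntegral R B] [FaithfulSMul R B]
    [Ring.DimensionLEOne B] : Ring.DimensionLEOne R where
  maximalOfPrime {p} hp0 _ := by
    obtain ⟨P, hP, rfl⟩ := Ideal.exists_ideal_over_prime_of_isIntegral_of_isDomain (S := B) p
      (by simp [(RingHom.injective_iff_ker_eq_bot _).mp (FaithfulSMul.algebraMap_injective R B)])
    have hP0 : P ≠ ⊥ := fun h => hp0 (by simp [h])
    exact Ideal.isMaximal_comap_of_isIntegral_of_isMaximal P (hI := hP.isMaximal hP0)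

theorem Ideal.eq_top_of_le_mul_of_ne_bot (A : Type*) {R : Type*} [CommRing R] [CommRing A]
    [IsDedekindDomain A] [Algebra R A] [Algebra.IsIntegral R A] [FaithfulSMul R A]
    {p c : Ideal R} (hc : c ≠ ⊥) (h : c ≤ p * c) : p = ⊤ := by
  have hinj := FaithfulSMul.algebraMap_injective R A
  have hcA : c.map (algebraMap R A) ≠ ⊥ := (Ideal.map_eq_bot_iff_of_injective hinj).not.mpr hc
  have hpcA : p.map (algebraMap R A) * c.map (algebraMap R A) = c.map (algebraMap R A) :=
    le_antisymm Ideal.mul_le_right (by rw [← Ideal.map_mul]; exact Ideal.map_mono h)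
  rw [mul_eq_right₀ hcA, Ideal.one_eq_top] at hpcA
  exact (Ideal.map_eq_top_iff _ hinj (algebraMap_isIntegral_iff.mpr inferInstance)).mp hpcA

def IsConductor (A : Type*) {R : Type*} [CommRing R] [CommRing A] [Algebra R A]
    (c : Ideal R) : Prop :=
  ∀ x : R, x ∈ c ↔ ∀ a : A, algebraMap R A x * a ∈ (algebraMap R A).range

section Conductor

variable {R A K : Type*} [CommRing R] [CommRing A] [Field K] [Algebra R A] [Algebra R K]
  [Algebra A K] [IsScalarTower R A K]

local notation "𝒪" => Submodule.restrictScalars R (1 : Submodule A K)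

theorem Submodule.one_le_restrictScalars_one : (1 : Submodule R K) ≤ 𝒪 :=
  Submodule.one_le.mpr (Submodule.mem_one.mpr ⟨1, map_one _⟩)

theorem Submodule.restrictScalars_one_mul_self : 𝒪 * 𝒪 = 𝒪 := by
  rw [← restrictScalars_mul, one_mul]

theorem Submodule.one_div_restrictScalars_one_mul_self : 1 / 𝒪 * 𝒪 = 1 / 𝒪 := by
  refine le_antisymm ?_
    ((mul_one _).symm.le.trans (mul_le_mul_right (one_le_restrictScalars_one (A := A)) _))
  rw [Submodule.le_div_iff_mul_le, mul_assoc, restrictScalars_one_mul_self,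
    ← Submodule.le_div_iff_mul_le]

theorem Submodule.fg_restrictScalars_one [Module.Finite R A] : (𝒪).FG := by
  rw [Submodule.one_eq_range, ← LinearMap.range_restrictScalars]
  exact Submodule.fg_range _

variable [FaithfulSMul A K] {c : Ideal R}

theorem IsConductor.coeSubmodule_eq (hc : IsConductor A c) : coeSubmodule K c = 1 / 𝒪 := by
  ext z
  simp only [mem_coeSubmodule, Submodule.mem_div_iff_forall_mul_mem, restrictScalars_mem,
    Submodule.mem_one]
  constructor
  · rintro ⟨x, hx, rfl⟩ _ ⟨a, rfl⟩
    obtain ⟨r, hr⟩ := (hc x).mp hx a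
    exact ⟨r, by rw [IsScalarTower.algebraMap_apply R A K, hr, map_mul,
      ← IsScalarTower.algebraMap_apply]⟩
  · intro hz
    obtain ⟨x, rfl⟩ := by simpa using hz 1 ⟨1, map_one _⟩
    refine ⟨x, (hc x).mpr fun a => ?_, rfl⟩
    obtain ⟨r, hr⟩ := hz _ ⟨a, rfl⟩
    refine ⟨r, FaithfulSMul.algebraMap_injective A K ?_⟩
    rw [← IsScalarTower.algebraMap_apply, hr, map_mul, ← IsScalarTower.algebraMap_apply]

theorem IsConductor.ne_bot [Nontrivial R] [IsFractionRing R K] [Module.Finite R A]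
    (hc : IsConductor A c) : c ≠ ⊥ := by
  obtain ⟨d, hd, hdA⟩ := FractionalIdeal.isFractional_of_fg (S := nonZeroDivisors R)
    (Submodule.fg_restrictScalars_one (R := R) (A := A) (K := K))
  have hdc : algebraMap R K d ∈ coeSubmodule K c := by
    rw [hc.coeSubmodule_eq, Submodule.mem_div_iff_forall_mul_mem]
    intro b hb
    obtain ⟨r, hr⟩ := hdA b hb
    exact Submodule.mem_one.mpr ⟨r, by rw [hr, Algebra.smul_def]⟩
  rintro rfl
  obtain ⟨x, hx, hxd⟩ := (mem_coeSubmodule _ _).mp hdc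
  rw [Ideal.mem_bot.mp hx, map_zero, eq_comm, IsFractionRing.to_map_eq_zero_iff] at hxd
  exact nonZeroDivisors.ne_zero hd hxd

variable [IsFractionRing R K]

theorem IsConductor.le_mul_of_isUnit (hc : IsConductor A c) {p : Ideal R} (hcp : c ≤ p)
    (hp : IsUnit (p : FractionalIdeal (nonZeroDivisors R) K)) : c ≤ p * c := by
  obtain ⟨U, hU⟩ := hp.exists_right_inv
  replace hU : coeSubmodule K p * (U : Submodule R K) = 1 := by
    rw [← FractionalIdeal.coe_coeIdeal, ← FractionalIdeal.coe_mul, hU, FractionalIdeal.coe_one]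
  have hUc : (U : Submodule R K) * coeSubmodule K c ≤ coeSubmodule K c := by
    rw [hc.coeSubmodule_eq, Submodule.le_div_iff_mul_le, mul_assoc,
      Submodule.one_div_restrictScalars_one_mul_self, ← hc.coeSubmodule_eq]
    calc (U : Submodule R K) * coeSubmodule K c
        ≤ U * coeSubmodule K p := mul_le_mul_right (coeSubmodule_mono K hcp) _
      _ = 1 := by rw [mul_comm, hU]
  rw [← coeSubmodule_le_coeSubmodule (S := K) le_rfl, coeSubmodule_mul]
  calc coeSubmodule K c = coeSubmodule K p * U * coeSubmodule K c := by rw [hU, one_mul]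
    _ = coeSubmodule K p * (U * coeSubmodule K c) := mul_assoc _ _ _
    _ ≤ coeSubmodule K p * coeSubmodule K c := mul_le_mul_right hUc _

theorem IsConductor.isUnit_coeIdeal_of_sup_eq_top [IsDomain R] [IsDedekindDomain A]
    [IsFractionRing A K] [FaithfulSMul R A] (hc : IsConductor A c) {I : Ideal R} (hI : I ≠ ⊥)
    (h : I ⊔ c = ⊤) : IsUnit (I : FractionalIdeal (nonZeroDivisors R) K) := by
  set P := coeSubmodule K I
  let J : FractionalIdeal (nonZeroDivisors A) K :=
    (I.map (algebraMap R A) : FractionalIdeal (nonZeroDivisors A) K)⁻¹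
  have hIA : I.map (algebraMap R A) ≠ ⊥ :=
    (Ideal.map_eq_bot_iff_of_injective (FaithfulSMul.algebraMap_injective R A)).not.mpr hI
  have hPJ : P * (J : Submodule A K).restrictScalars R = 𝒪 := by
    rw [← Submodule.restrictScalars_span_mul, ← coeSubmodule_map_algebraMap,
      ← FractionalIdeal.coe_coeIdeal, ← FractionalIdeal.coe_mul,
      mul_inv_cancel₀ (FractionalIdeal.coeIdeal_ne_zero.mpr hIA), FractionalIdeal.coe_one]
  have hCJ : coeSubmodule K c * (J : Submodule A K).restrictScalars R ≤ 1 / P := by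
    rw [Submodule.le_div_iff_mul_le, mul_assoc, mul_comm _ P, hPJ, hc.coeSubmodule_eq,
      ← Submodule.le_div_iff_mul_le]
  have hC : coeSubmodule K c ≤ P * (1 / P) := calc
    coeSubmodule K c = coeSubmodule K c * 𝒪 := by
      rw [hc.coeSubmodule_eq, Submodule.one_div_restrictScalars_one_mul_self]
    _ = P * (coeSubmodule K c * (J : Submodule A K).restrictScalars R) := by
      rw [← hPJ, mul_left_comm]
    _ ≤ P * (1 / P) := mul_le_mul_right hCJ _
  have hP : P ≤ P * (1 / P) := Submodule.le_self_mul_one_div (by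
    rintro _ ⟨x, -, rfl⟩
    exact Submodule.mem_one.mpr ⟨x, rfl⟩)
  have hPC : (1 : Submodule R K) = P ⊔ coeSubmodule K c := by
    rw [← coeSubmodule_sup, h, coeSubmodule_top]
  have hPP : P * (1 / P) = 1 :=
    le_antisymm Submodule.mul_one_div_le_one (hPC.le.trans (sup_le hP hC))
  refine IsUnit.of_mul_eq_one (1 / (I : FractionalIdeal (nonZeroDivisors R) K)) ?_
  rw [← FractionalIdeal.coeToSubmodule_inj, FractionalIdeal.coe_mul,
    FractionalIdeal.coe_div (FractionalIdeal.coeIdeal_ne_zero.mpr hI), FractionalIdeal.coe_one,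
    FractionalIdeal.coe_coeIdeal, hPP]

end Conductor

theorem stmt_9_general {R A K : Type*} [CommRing R] [IsDomain R] [CommRing A]
    [IsDedekindDomain A] [Field K] [Algebra R A] [Algebra R K] [Algebra A K]
    [IsScalarTower R A K] [IsFractionRing R K] [IsFractionRing A K]
    [Module.Finite R A]
    (c : Ideal R)
    (hc : ∀ x : R, x ∈ c ↔ ∀ a : A, algebraMap R A x * a ∈ (algebraMap R A).range)
    (p : Ideal R) (hp : p.IsPrime) (hp0 : p ≠ ⊥) :
    IsUnit (p : FractionalIdeal (nonZeroDivisors R) K) ↔ p ⊔ c = ⊤ := by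
  have hc : IsConductor A c := hc
  have : FaithfulSMul R A := FaithfulSMul.tower_bot R A K
  have : Ring.DimensionLEOne R := Ring.DimensionLEOne.of_isIntegral_of_faithfulSMul R A
  have hpm : p.IsMaximal := hp.isMaximal hp0
  refine ⟨fun hpu => ?_, hc.isUnit_coeIdeal_of_sup_eq_top hp0⟩
  by_contra hpc
  have hcp : c ≤ p := le_sup_right.trans (hpm.eq_of_le hpc le_sup_left).ge
  exact hpm.ne_top <| Ideal.eq_top_of_le_mul_of_ne_bot A (hc.ne_bot (K := K))
    (hc.le_mul_of_isUnit hcp hpu)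

/-- Let `R ⊆ A` be an order in a Dedekind domain `A` (same fraction field `K`, `A`
finite over `R`), with conductor `c = { x ∈ R : xA ⊆ R }`.  A prime ideal `p` of `R`
is invertible if and only if `p` is coprime to the conductor: `p + c = R`. -/
theorem stmt_9 {R A K : Type*} [CommRing R] [IsDomain R] [CommRing A] [IsDomain A]
    [IsDedekindDomain A] [Field K] [Algebra R A] [Algebra R K] [Algebra A K]
    [IsScalarTower R A K] [IsFractionRing R K] [IsFractionRing A K]
    [Module.Finite R A]
    (c : Ideal R)
    (hc : ∀ x : R, x ∈ c ↔ ∀ a : A, algebraMap R A x * a ∈ (algebraMap R A).range)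
    (p : Ideal R) (hp : p.IsPrime) (hp0 : p ≠ ⊥) :
    IsUnit (p : FractionalIdeal (nonZeroDivisors R) K) ↔ p ⊔ c = ⊤ :=
  stmt_9_general c hc p hp hp0
end

section
/- Let R be an integral domain, a an invertible fractional R-ideal, and p a maximal ideal of R. Then the R/p-vector space a/pa is one-dimensional. -/
set_option synthInstance.maxHeartbeats 1000000
set_option maxHeartbeats 1000000

/-- Let `R` be a domain, `a` an invertible fractional `R`-ideal, and `p` a maximal
ideal of `R`.  Then `a/pa` is a one-dimensional `R/p`-vector space. -/
theorem stmt_13 {R K : Type*} [CommRing R] [IsDomain R] [Field K] [Algebra R K]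
    [IsFractionRing R K]
    (a : FractionalIdeal (nonZeroDivisors R) K) (ha : IsUnit a)
    (p : Ideal R) (hp : p.IsMaximal) :
    Module.finrank (R ⧸ p)
      ((a : Submodule R K) ⧸ (p • ⊤ : Submodule R (a : Submodule R K))) = 1 := by
  have hinj : Function.Injective (algebraMap R K) := IsFractionRing.injective R K
  have hmul : a * a⁻¹ = 1 := (FractionalIdeal.mul_inv_cancel_iff_isUnit K).mpr ha
  have hnle : ¬ a * a⁻¹ ≤ (p : FractionalIdeal (nonZeroDivisors R) K) := by
    rw [hmul, ← FractionalIdeal.coeIdeal_top, FractionalIdeal.coeIdeal_le_coeIdeal]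
    exact fun h => hp.ne_top (top_le_iff.mp h)
  rw [FractionalIdeal.mul_le] at hnle
  push_neg at hnle
  obtain ⟨x, hx, y, hy, hxy⟩ := hnle
  -- any element of `a` multiplied by `y` lands in `R`
  have hprod : ∀ z ∈ a, ∃ s : R, algebraMap R K s = z * y := by
    intro z hz
    have h1 : z * y ∈ (1 : FractionalIdeal (nonZeroDivisors R) K) := by
      rw [← hmul]; exact FractionalIdeal.mul_mem_mul hz hy
    rw [← FractionalIdeal.coeIdeal_top] at h1
    obtain ⟨s, _, hs⟩ := (FractionalIdeal.mem_coeIdeal _).mp h1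
    exact ⟨s, hs⟩
  obtain ⟨r, hr⟩ := hprod x hx
  have hrp : r ∉ p := fun h =>
    hxy ((FractionalIdeal.mem_coeIdeal _).mpr ⟨r, h, hr⟩)
  -- elements of `p • a` multiplied by `y` land in `p`
  have key : ∀ z ∈ p • (a : Submodule R K), ∃ s ∈ p, algebraMap R K s = z * y := by
    intro z hz
    refine Submodule.smul_induction_on hz ?_ ?_
    · intro c hc w hw
      obtain ⟨s, hs⟩ := hprod w (FractionalIdeal.mem_coe.mp hw)
      refine ⟨c * s, p.mul_mem_right s hc, ?_⟩
      rw [map_mul, hs, smul_mul_assoc, Algebra.smul_def]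
    · rintro z₁ z₂ ⟨s₁, hs₁p, hs₁⟩ ⟨s₂, hs₂p, hs₂⟩
      exact ⟨s₁ + s₂, p.add_mem hs₁p hs₂p, by rw [map_add, hs₁, hs₂, add_mul]⟩
  have hxM : x ∈ (a : Submodule R K) := FractionalIdeal.mem_coe.mpr hx
  set v : (a : Submodule R K) ⧸ (p • ⊤ : Submodule R (a : Submodule R K)) :=
    Submodule.Quotient.mk ⟨x, hxM⟩
  haveI := hp
  haveI : NoZeroSMulDivisors (R ⧸ p)
      ((a : Submodule R K) ⧸ (p • ⊤ : Submodule R (a : Submodule R K))) := by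
    refine ⟨fun {c w} h => ?_⟩
    by_cases hc : c = 0
    · exact Or.inl hc
    · refine Or.inr ?_
      obtain ⟨u, rfl⟩ := Ideal.Quotient.mk_surjective c
      have hup : u ∉ p := by simpa [Ideal.Quotient.eq_zero_iff_mem] using hc
      obtain ⟨u', m, hm, h1⟩ := hp.exists_inv hup
      have hone : Ideal.Quotient.mk p (u' * u) = 1 := by
        rw [← map_one (Ideal.Quotient.mk p), Ideal.Quotient.mk_eq_mk_iff_sub_mem]
        have : u' * u - 1 = -m := by linear_combination h1
        rw [this]
        exact p.neg_mem hm
      calc w = Ideal.Quotient.mk p (u' * u) • w := by rw [hone, one_smul]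
        _ = Ideal.Quotient.mk p u' • (Ideal.Quotient.mk p u • w) := by
            rw [map_mul, mul_smul]
        _ = 0 := by rw [h, smul_zero]
  refine finrank_eq_one v ?_ ?_
  · -- v ≠ 0
    intro h0
    rw [Submodule.Quotient.mk_eq_zero, Submodule.mem_smul_top_iff] at h0
    obtain ⟨s, hsp, hs⟩ := key x h0
    rw [← hr] at hs
    exact hrp (by rwa [hinj hs] at hsp)
  · -- every element is a multiple of v
    intro w
    obtain ⟨⟨z, hzM⟩, rfl⟩ := Submodule.Quotient.mk_surjective _ w
    have hza : z ∈ a := FractionalIdeal.mem_coe.mp hzM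
    obtain ⟨s, hs⟩ := hprod z hza
    obtain ⟨u, m, hm, hum⟩ := hp.exists_inv hrp
    refine ⟨Ideal.Quotient.mk p (u * s), ?_⟩
    rw [Module.Quotient.mk_smul_mk]
    rw [Submodule.Quotient.eq, Submodule.mem_smul_top_iff]
    have hsx : (s : R) • x = r • z := by
      rw [Algebra.smul_def, Algebra.smul_def, hs, hr]; ring
    have : ((u * s) • (⟨x, hxM⟩ : (a : Submodule R K)) - ⟨z, hzM⟩ : (a : Submodule R K)) =
        ((u * s) • x - z : K) := rfl
    rw [this]
    have hcalc : (u * s) • x - z = m • (-z) := by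
      have hur : (u * r : R) = 1 - m := by linear_combination hum
      calc (u * s) • x - z = u • ((s : R) • x) - z := by rw [mul_smul]
        _ = u • (r • z) - z := by rw [hsx]
        _ = (u * r) • z - z := by rw [mul_smul]
        _ = (1 - m) • z - z := by rw [hur]
        _ = m • (-z) := by rw [sub_smul, one_smul, smul_neg]; ring_nf
    rw [hcalc]
    exact Submodule.smul_mem_smul hm (Submodule.neg_mem _ hzM)
end
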